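/- arXiv:1207.5813 — 8 statements merged into one kernel-verified Lean document; each statement's English description precedes it below -/
import Mathlib

section
/- Every basic feasible solution of the bipartite relaxation of the perfect matching polytope (degree constraints x(δ(u))=1 for all vertices and x ≥ 0) is half-integral: every coordinate lies in {0, 1/2, 1}, and its support is a disjoint union of edges and odd cycles. -/
open Finset

/-- Feasibility for the bipartite relaxation of the perfect matching polytope:
`x` is nonnegative, supported on edges of `G`, and satisfies `x(δ(u)) = 1` for
every vertex `u`. -/
def BipartiteFeasible {V : Type*} [Fintype V] [DecidableEq V] (G : SimpleGraph V)
    [DecidableRel G.Adj] (x : Sym2 V → ℝ) : Prop :=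
  (∀ e, 0 ≤ x e) ∧ (∀ e, e ∉ G.edgeSet → x e = 0) ∧
    ∀ u : V, ∑ e ∈ G.incidenceFinset u, x e = 1

/-- The subgraph of `G` formed by the edges of value `1/2` in `x`. -/
def HalfGraph {V : Type*} (G : SimpleGraph V) (x : Sym2 V → ℝ) : SimpleGraph V where
  Adj u v := G.Adj u v ∧ x s(u, v) = 1/2
  symm := by
    constructor
    intro u v h
    rw [Sym2.eq_swap] at h; exact ⟨h.1.symm, h.2⟩
  loopless := by constructor; intro u h; exact G.irrefl h.1

/-!
If `x` is extreme, every direction `d` that vanishes off the support of `x` and has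
`d(δ(u)) = 0` at every vertex is zero, since otherwise `x ± ε d` are feasible for small `ε > 0`.
For the set `F` of fractional edges this makes their incidence vectors linearly independent, so
`|F|` is at most the number of vertices touched by `F`. Each such vertex meets at least two edges
of `F` (an edge of value `1` cannot share a vertex with a fractional one), so by handshaking it
meets exactly two, and `d = x - 1/2` on `F` is then an admissible direction: `x = 1/2` on `F`.
The half-edges therefore form vertex-disjoint cycles, and an even one is ruled out by the
direction alternating `±1` along it.
-/

open Filter Topology

lemma exists_pos_mul_abs_le {ι : Type*} [Finite ι] {x d : ι → ℝ} (hx : ∀ i, 0 ≤ x i)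
    (hd : ∀ i, x i = 0 → d i = 0) : ∃ ε > 0, ∀ i, ε * |d i| ≤ x i := by
  have : ∀ᶠ ε in 𝓝[>] (0 : ℝ), ∀ i, ε * |d i| ≤ x i := by
    refine eventually_all.2 fun i => ?_
    rcases (hx i).eq_or_lt with h | h
    · simp [hd i h.symm, ← h]
    · have : Tendsto (fun ε : ℝ => ε * |d i|) (𝓝[>] 0) (𝓝 0) :=
        ((continuous_id.mul continuous_const).tendsto' 0 0 (by simp)).mono_left
          nhdsWithin_le_nhds
      exact this.eventually (ge_mem_nhds h)
  exact (this.and self_mem_nhdsWithin).exists.imp fun ε h => ⟨h.2, h.1⟩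

lemma SimpleGraph.Walk.IsCycle.ncard_verts_toSubgraph {V : Type*} {G : SimpleGraph V} {v : V}
    {p : G.Walk v v} (hp : p.IsCycle) : p.toSubgraph.verts.ncard = p.length := by
  classical
  have : p.toSubgraph.verts = ↑p.support.tail.toFinset := by
    ext w
    rw [Walk.mem_verts_toSubgraph, mem_coe, List.mem_toFinset, Walk.mem_support_iff]
    exact or_iff_right_of_imp fun h => h ▸ p.end_mem_tail_support hp.not_nil
  rw [this, Set.ncard_coe_finset, List.toFinset_card_of_nodup hp.support_nodup]
  simp

lemma halfGraph_le {V : Type*} (G : SimpleGraph V) (x : Sym2 V → ℝ) : HalfGraph G x ≤ G :=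
  fun _ _ h => h.1

lemma mem_edgeSet_halfGraph {V : Type*} {G : SimpleGraph V} {x : Sym2 V → ℝ} {e : Sym2 V} :
    e ∈ (HalfGraph G x).edgeSet ↔ e ∈ G.edgeSet ∧ x e = 1 / 2 := by
  induction e with
  | h u v => rfl

def IsBipartiteExtreme {V : Type*} [Fintype V] [DecidableEq V] (G : SimpleGraph V)
    [DecidableRel G.Adj] (x : Sym2 V → ℝ) : Prop :=
  ¬ ∃ y z : Sym2 V → ℝ, BipartiteFeasible G y ∧ BipartiteFeasible G z ∧
    y ≠ z ∧ (∀ e, x e = (y e + z e) / 2)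

open Classical in
noncomputable def fractionalEdges {V : Type*} [Fintype V] (x : Sym2 V → ℝ) : Finset (Sym2 V) :=
  {e | x e ≠ 0 ∧ x e ≠ 1}

lemma mem_fractionalEdges {V : Type*} [Fintype V] {x : Sym2 V → ℝ} {e : Sym2 V} :
    e ∈ fractionalEdges x ↔ x e ≠ 0 ∧ x e ≠ 1 := by
  simp [fractionalEdges]

section

variable {V : Type*} [Fintype V] [DecidableEq V] {G : SimpleGraph V} [DecidableRel G.Adj]
  {x : Sym2 V → ℝ}

lemma sum_incidenceFinset_eq_sum_filter_mem {d : Sym2 V → ℝ} (hd : ∀ e ∉ G.edgeSet, d e = 0)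
    (u : V) : ∑ e ∈ G.incidenceFinset u, d e = ∑ e with u ∈ e, d e := by
  rw [SimpleGraph.incidenceFinset_eq_filter]
  refine sum_subset (fun e => by simp +contextual) fun e he hne => hd e ?_
  simpa [(mem_filter.1 he).2] using hne

lemma sum_card_filter_mem_eq_two_mul {F : Finset (Sym2 V)} (hF : ∀ e ∈ F, ¬ e.IsDiag) :
    ∑ u, #{e ∈ F | u ∈ e} = 2 * #F := by
  have := sum_card_bipartiteAbove_eq_sum_card_bipartiteBelow (s := univ) (t := F)
    (r := fun (u : V) (e : Sym2 V) => u ∈ e)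
  simp only [bipartiteAbove, bipartiteBelow] at this
  rw [this, sum_congr rfl fun e he => ?_, sum_const, smul_eq_mul, mul_comm]
  rw [← Sym2.card_toFinset_of_not_isDiag e (hF e he)]
  congr 1; ext; simp

open Classical in
lemma ncard_neighborSet_halfGraph (u : V) :
    ((HalfGraph G x).neighborSet u).ncard = #{e ∈ G.incidenceFinset u | x e = 1 / 2} := by
  rw [← Nat.card_coe_set_eq, ← Nat.card_congr ((HalfGraph G x).incidenceSetEquivNeighborSet u),
    Nat.card_coe_set_eq, ← Set.ncard_coe_finset]
  congr 1
  ext e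
  simp [SimpleGraph.incidenceSet, mem_edgeSet_halfGraph, and_right_comm]

namespace BipartiteFeasible

lemma mem_edgeSet_of_ne_zero (hx : BipartiteFeasible G x) {e : Sym2 V} (he : x e ≠ 0) :
    e ∈ G.edgeSet :=
  not_not.1 (mt (hx.2.1 e) he)

lemma sum_filter_mem (hx : BipartiteFeasible G x) (u : V) : ∑ e with u ∈ e, x e = 1 := by
  rw [← sum_incidenceFinset_eq_sum_filter_mem hx.2.1, hx.2.2]

lemma add_le_one (hx : BipartiteFeasible G x) {u : V} {e f : Sym2 V} (he : u ∈ e) (hf : u ∈ f)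
    (hef : e ≠ f) : x e + x f ≤ 1 := by
  rw [← hx.sum_filter_mem u, ← sum_pair hef]
  exact sum_le_sum_of_subset_of_nonneg (by simp [insert_subset_iff, he, hf])
    fun e _ _ => hx.1 e

lemma eq_zero_of_eq_one (hx : BipartiteFeasible G x) {u : V} {e f : Sym2 V} (he : u ∈ e)
    (hf : u ∈ f) (hef : e ≠ f) (h1 : x e = 1) : x f = 0 := by
  linarith [hx.add_le_one he hf hef, hx.1 f]

lemma add_smul (hx : BipartiteFeasible G x) {d : Sym2 V → ℝ} (hdx : ∀ e, x e = 0 → d e = 0)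
    (hd : ∀ u, ∑ e ∈ G.incidenceFinset u, d e = 0) {t : ℝ} (ht : ∀ e, |t| * |d e| ≤ x e) :
    BipartiteFeasible G (x + t • d) := by
  refine ⟨fun e => ?_, fun e he => ?_, fun u => ?_⟩
  · have := ht e
    rw [← abs_mul] at this
    simp only [Pi.add_apply, Pi.smul_apply, smul_eq_mul]
    linarith [neg_abs_le (t * d e)]
  · simp [hx.2.1 e he, hdx e (hx.2.1 e he)]
  · simp [sum_add_distrib, ← mul_sum, hx.2.2 u, hd u]

lemma sum_fractional_eq_one (hx : BipartiteFeasible G x) {u : V} {f : Sym2 V} (hu : u ∈ f)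
    (hf : f ∈ fractionalEdges x) : ∑ e ∈ fractionalEdges x with u ∈ e, x e = 1 := by
  refine (sum_subset (fun e => by simp +contextual) fun e he hfrac => ?_).trans
    (hx.sum_filter_mem u)
  simp only [mem_filter, mem_univ, true_and, mem_fractionalEdges] at he hfrac hf
  by_contra he0
  have he1 : x e = 1 := by tauto
  exact hf.1 (hx.eq_zero_of_eq_one he hu (by rintro rfl; exact hf.2 he1) he1)

lemma two_le_card_fractional (hx : BipartiteFeasible G x) {u : V} {f : Sym2 V} (hu : u ∈ f)
    (hf : f ∈ fractionalEdges x) : 2 ≤ #{e ∈ fractionalEdges x | u ∈ e} := by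
  by_contra! hlt
  have huf : f ∈ {e ∈ fractionalEdges x | u ∈ e} := mem_filter.2 ⟨hf, hu⟩
  refine (mem_fractionalEdges.1 hf).2 ?_
  rw [← hx.sum_fractional_eq_one hu hf, sum_eq_single_of_mem f huf fun e he hef =>
    absurd (card_le_one.1 (by omega) e he f huf) hef]

open Classical in
lemma card_filter_eq_one_le_one (hx : BipartiteFeasible G x) (u : V) :
    #{e ∈ G.incidenceFinset u | x e = 1} ≤ 1 := by
  refine card_le_one.2 fun e he f hf => ?_
  simp only [mem_filter, SimpleGraph.mem_incidenceFinset] at he hf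
  by_contra hef
  linarith [hx.add_le_one he.1.2 hf.1.2 hef]

open Classical in
lemma card_half_eq_zero (hx : BipartiteFeasible G x) {u : V} {e : Sym2 V}
    (he : e ∈ G.incidenceFinset u) (h1 : x e = 1) :
    #{f ∈ G.incidenceFinset u | x f = 1 / 2} = 0 := by
  refine card_eq_zero.2 (filter_eq_empty_iff.2 fun f hf hf2 => ?_)
  rw [SimpleGraph.mem_incidenceFinset] at he hf
  have : x f = 0 := hx.eq_zero_of_eq_one he.2 hf.2 (by rintro rfl; norm_num [h1] at hf2) h1
  norm_num [this] at hf2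

open Classical in
lemma card_half_eq_two (hx : BipartiteFeasible G x) (hhalf : ∀ e, x e = 0 ∨ x e = 1 / 2 ∨ x e = 1)
    {u : V} (h1 : ∀ e ∈ G.incidenceFinset u, x e ≠ 1) :
    #{e ∈ G.incidenceFinset u | x e = 1 / 2} = 2 := by
  have hsum : ∑ e ∈ G.incidenceFinset u with x e = 1 / 2, x e = 1 := by
    refine (sum_subset (filter_subset _ _) fun e he hne => ?_).trans (hx.2.2 u)
    rw [mem_filter, not_and] at hne
    exact (hhalf e).resolve_right fun h => h.elim (hne he) (h1 e he)
  rw [sum_congr rfl fun e he => (mem_filter.1 he).2, sum_const, nsmul_eq_mul] at hsum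
  exact_mod_cast (by linarith : (#{e ∈ G.incidenceFinset u | x e = 1 / 2} : ℝ) = 2)

lemma ncard_neighborSet_halfGraph_eq_zero_or_two (hx : BipartiteFeasible G x)
    (hhalf : ∀ e, x e = 0 ∨ x e = 1 / 2 ∨ x e = 1) (u : V) :
    ((HalfGraph G x).neighborSet u).ncard = 0 ∨ ((HalfGraph G x).neighborSet u).ncard = 2 := by
  rw [ncard_neighborSet_halfGraph]
  by_cases h1 : ∃ e ∈ G.incidenceFinset u, x e = 1
  · obtain ⟨e, he, hx1⟩ := h1
    exact .inl (hx.card_half_eq_zero he hx1)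
  · exact .inr (hx.card_half_eq_two hhalf fun e he hx1 => h1 ⟨e, he, hx1⟩)

end BipartiteFeasible

namespace IsBipartiteExtreme

lemma eq_zero (hext : IsBipartiteExtreme G x) (hx : BipartiteFeasible G x) {d : Sym2 V → ℝ}
    (hdx : ∀ e, x e = 0 → d e = 0) (hd : ∀ u, ∑ e ∈ G.incidenceFinset u, d e = 0) : d = 0 := by
  obtain ⟨ε, hε, hεd⟩ := exists_pos_mul_abs_le hx.1 hdx
  by_contra hne
  refine hext ⟨x + ε • d, x + (-ε) • d, hx.add_smul hdx hd (by simpa [abs_of_pos hε]),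
    hx.add_smul hdx hd (by simpa [abs_of_pos hε]), fun h => hne ?_, fun e => by simp; ring⟩
  have h2 : (2 * ε) • d = 0 := by
    rw [mul_smul, ← sub_eq_zero.2 h]; module
  exact (smul_eq_zero.1 h2).resolve_left (by positivity)

lemma card_le_card (hext : IsBipartiteExtreme G x) (hx : BipartiteFeasible G x)
    {F : Finset (Sym2 V)} (hF : ∀ e ∈ F, x e ≠ 0) : #F ≤ #{u | ∃ e ∈ F, u ∈ e} := by
  set S : Finset V := {u | ∃ e ∈ F, u ∈ e}
  let M : Matrix S F ℝ := fun u e => if (u : V) ∈ (e : Sym2 V) then 1 else 0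
  suffices Function.Injective M.mulVecLin by
    simpa using LinearMap.finrank_le_finrank_of_injective this
  refine (injective_iff_map_eq_zero _).2 fun c hc => funext fun e => ?_
  let d : Sym2 V → ℝ := fun e => if h : e ∈ F then c ⟨e, h⟩ else 0
  have hdF : ∀ e ∉ F, d e = 0 := fun e he => dif_neg he
  have hd : ∀ u, ∑ e ∈ G.incidenceFinset u, d e = 0 := by
    intro u
    rw [sum_incidenceFinset_eq_sum_filter_mem fun e he => hdF e fun h => he
      (hx.mem_edgeSet_of_ne_zero (hF e h)), sum_filter, ← sum_subset (subset_univ F)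
      fun e _ he => by simp [hdF e he], ← sum_attach]
    by_cases hu : u ∈ S
    · have := congrFun hc ⟨u, hu⟩
      rw [Matrix.mulVecLin_apply] at this
      simpa [M, d, Matrix.mulVec, dotProduct] using this
    · refine sum_eq_zero fun e _ => if_neg fun h => hu ?_
      simpa [S] using ⟨e, e.2, h⟩
  simpa [d] using congrFun (hext.eq_zero hx (fun e h => hdF e fun he => hF e he h) hd) e

lemma card_fractional_eq_two (hext : IsBipartiteExtreme G x) (hx : BipartiteFeasible G x)
    {u : V} {f : Sym2 V} (hu : u ∈ f) (hf : f ∈ fractionalEdges x) :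
    #{e ∈ fractionalEdges x | u ∈ e} = 2 := by
  set F := fractionalEdges x
  set S : Finset V := {u | ∃ e ∈ F, u ∈ e}
  have hS : ∀ v ∈ S, 2 ≤ #{e ∈ F | v ∈ e} := fun v hv => by
    obtain ⟨e, he, hve⟩ := (mem_filter.1 hv).2
    exact hx.two_le_card_fractional hve he
  have hsum : ∑ v ∈ S, #{e ∈ F | v ∈ e} = 2 * #F := by
    rw [← sum_card_filter_mem_eq_two_mul fun e he => G.not_isDiag_of_mem_edgeSet
      (hx.mem_edgeSet_of_ne_zero (mem_fractionalEdges.1 he).1)]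
    refine sum_subset (subset_univ S) fun v _ hv => card_eq_zero.2 (filter_eq_empty_iff.2 ?_)
    exact fun e he hve => hv (mem_filter.2 ⟨mem_univ v, e, he, hve⟩)
  have hcard : #F ≤ #S := hext.card_le_card hx fun e he => (mem_fractionalEdges.1 he).1
  have h2 : ∑ v ∈ S, 2 = ∑ v ∈ S, #{e ∈ F | v ∈ e} := by
    have := sum_le_sum hS
    rw [hsum, sum_const, smul_eq_mul] at this ⊢
    omega
  exact ((sum_eq_sum_iff_of_le hS).1 h2 u (mem_filter.2 ⟨mem_univ u, f, hf, hu⟩)).symm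

lemma eq_half (hext : IsBipartiteExtreme G x) (hx : BipartiteFeasible G x) {f : Sym2 V}
    (hf0 : x f ≠ 0) (hf1 : x f ≠ 1) : x f = 1 / 2 := by
  let d : Sym2 V → ℝ := fun e => if e ∈ fractionalEdges x then x e - 1 / 2 else 0
  have hdx : ∀ e, x e = 0 → d e = 0 := fun e he => if_neg fun h => (mem_fractionalEdges.1 h).1 he
  have hd : ∀ u, ∑ e ∈ G.incidenceFinset u, d e = 0 := by
    intro u
    rw [sum_incidenceFinset_eq_sum_filter_mem fun e he => hdx e (hx.2.1 e he), sum_ite_mem,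
      ← filter_mem_eq_inter, filter_comm, filter_mem_eq_inter, univ_inter]
    by_cases hu : ∃ e ∈ fractionalEdges x, u ∈ e
    · obtain ⟨e, he, hue⟩ := hu
      rw [sum_sub_distrib, hx.sum_fractional_eq_one hue he, sum_const,
        hext.card_fractional_eq_two hx hue he]
      norm_num
    · exact sum_eq_zero fun e he => absurd ⟨e, mem_filter.1 he⟩ hu
  have := congrFun (hext.eq_zero hx hdx hd) f
  simp only [d, if_pos (mem_fractionalEdges.2 ⟨hf0, hf1⟩), Pi.zero_apply] at this
  linarith

lemma odd_length_of_isCycle (hext : IsBipartiteExtreme G x) (hx : BipartiteFeasible G x)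
    {v : V} {p : G.Walk v v} (hp : p.IsCycle) (hpx : ∀ e ∈ p.edges, x e ≠ 0) :
    Odd p.length := by
  by_contra heven
  rw [Nat.not_odd_iff_even] at heven
  let edge (i : ℕ) : Sym2 V := s(p.getVert i, p.getVert (i + 1))
  have hedge : ∀ i (hi : i < p.length), p.edges[i]'(by simpa using hi) = edge i :=
    fun i _ => p.getElem_edges _
  let d : Sym2 V → ℝ := fun e => ∑ i ∈ range p.length, if edge i = e then (-1) ^ i else 0
  have hdx : ∀ e, x e = 0 → d e = 0 := fun e he => sum_eq_zero fun i hi => if_neg fun h => by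
    rw [← h, ← hedge i (mem_range.1 hi)] at he
    exact hpx _ (List.getElem_mem _) he
  -- At `w`, the `i`-th edge contributes `sign w i - sign w (i + 1)`; the sum telescopes to
  -- `sign w 0 - sign w p.length`, which vanishes because `p` is closed of even length.
  let sign (w : V) (i : ℕ) : ℝ := if w = p.getVert i then (-1) ^ i else 0
  have hd : ∀ w, ∑ e ∈ G.incidenceFinset w, d e = 0 := by
    intro w
    have hterm : ∀ i ∈ range p.length,
        ∑ e with w ∈ e, (if edge i = e then (-1 : ℝ) ^ i else 0) = sign w i - sign w (i + 1) := by
      intro i hi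
      have hne := (p.adj_getVert_succ (mem_range.1 hi)).ne
      rw [sum_ite_eq]
      by_cases h1 : w = p.getVert i <;> by_cases h2 : w = p.getVert (i + 1) <;>
        simp_all [edge, sign, pow_succ]
    rw [sum_incidenceFinset_eq_sum_filter_mem fun e he => hdx e (hx.2.1 e he), sum_comm,
      sum_congr rfl hterm, sum_range_sub']
    simp [sign, heven.neg_one_pow]
  have h0 : 0 < p.length := by have := hp.three_le_length; omega
  have := congrFun (hext.eq_zero hx hdx hd) (edge 0)
  simp only [d, Pi.zero_apply] at this
  rw [sum_eq_single_of_mem 0 (mem_range.2 h0) fun i hi hi0 => if_neg fun h => hi0 ?_] at this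
  · simp at this
  rw [← hedge i (mem_range.1 hi), ← hedge 0 h0] at h
  exact hp.edges_nodup.getElem_inj_iff.1 h

end IsBipartiteExtreme

end

open Classical in
/-- every basic feasible solution (extreme point) of the bipartite
relaxation is half-integral: each coordinate lies in {0, 1/2, 1}, and the support is
a disjoint union of edges and odd cycles.  The latter is expressed as: every vertex
is incident to at most one edge of value 1; a vertex incident to a 1-edge meets no
half-edge; in the graph of half-edges every vertex has degree 0 or 2; and every
connected component of the half-edge graph containing an edge has an odd number of
vertices (an odd cycle). -/
theorem basic_feasible_solution_proper_half_integral
    {V : Type*} [Fintype V] [DecidableEq V] (G : SimpleGraph V) [DecidableRel G.Adj]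
    (x : Sym2 V → ℝ)
    (hfeas : BipartiteFeasible G x)
    (hextreme : ¬ ∃ y z : Sym2 V → ℝ, BipartiteFeasible G y ∧ BipartiteFeasible G z ∧
      y ≠ z ∧ (∀ e, x e = (y e + z e) / 2)) :
    (∀ e, x e = 0 ∨ x e = 1/2 ∨ x e = 1) ∧
    (∀ u : V, ((G.incidenceFinset u).filter (fun e => x e = 1)).card ≤ 1) ∧
    (∀ u : V, (∃ e ∈ G.incidenceFinset u, x e = 1) →
      ((HalfGraph G x).neighborSet u).ncard = 0) ∧
    (∀ u : V, ((HalfGraph G x).neighborSet u).ncard = 0 ∨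
      ((HalfGraph G x).neighborSet u).ncard = 2) ∧
    (∀ c : (HalfGraph G x).ConnectedComponent,
      (∃ u ∈ c.supp, ((HalfGraph G x).neighborSet u).ncard = 2) →
        Odd c.supp.ncard) := by
  have hext : IsBipartiteExtreme G x := hextreme
  have hhalf : ∀ e, x e = 0 ∨ x e = 1 / 2 ∨ x e = 1 := fun e =>
    or_iff_not_imp_left.2 fun h0 => or_iff_not_imp_right.2 (hext.eq_half hfeas h0)
  have hdeg := hfeas.ncard_neighborSet_halfGraph_eq_zero_or_two hhalf
  refine ⟨hhalf, hfeas.card_filter_eq_one_le_one, fun u ⟨e, he, hx1⟩ => ?_, hdeg, ?_⟩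
  · rw [ncard_neighborSet_halfGraph]
    exact hfeas.card_half_eq_zero he hx1
  rintro c ⟨u, hu, hu2⟩
  have hcycles : (HalfGraph G x).IsCycles := fun v hv =>
    (hdeg v).resolve_left ((Set.ncard_pos (Set.toFinite _)).2 hv).ne'
  obtain ⟨p, hp, hverts⟩ := hcycles.exists_cycle_toSubgraph_verts_eq_connectedComponentSupp hu
    (Set.nonempty_of_ncard_ne_zero (by omega))
  rw [← hverts, hp.ncard_verts_toSubgraph, ← p.length_mapLe (halfGraph_le G x)]
  refine hext.odd_length_of_isCycle hfeas (hp.mapLe _) fun e he => ?_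
  rw [p.edges_mapLe_eq_edges] at he
  rw [(mem_edgeSet_halfGraph.1 (p.edges_subset_edgeSet he)).2]
  norm_num
end

section
/- A laminar family of odd subsets of an n-element set V, each subset of size at least 3 and at most |V|-3, has at most n/2 members. -/
/-!
Induction on the members of the family: a member `M` contains disjointly the maximal members
`N₁, …, N_k` of the family strictly below it, and by induction each `Nᵢ` has at least
`2 · #{X ⊆ Nᵢ} + 1` elements, so `2 · #{X ⊂ M} + k ≤ ∑ |Nᵢ| ≤ |M|`. Since `M` and the `Nᵢ`
are odd and `|M| ≥ 3`, this improves to `2 · #{X ⊆ M} + 1 ≤ |M|` whatever `k` is. Summing the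
same bound over the maximal members of the whole family gives `2 |F| ≤ |V|`.
-/

/-- A family of sets is laminar if any two members are disjoint or nested. -/
def Laminar {V : Type*} [DecidableEq V] (F : Finset (Finset V)) : Prop :=
  ∀ X ∈ F, ∀ Y ∈ F, X ∩ Y = ∅ ∨ X ⊆ Y ∨ Y ⊆ X

open Finset

namespace Finset

variable {α : Type*}

lemma sum_mod_two_eq_card_mod_two {s : Finset α} {f : α → ℕ} (hf : ∀ i ∈ s, Odd (f i)) :
    (∑ i ∈ s, f i) % 2 = #s % 2 := by
  have h := odd_sum_iff_odd_card_odd (s := s) f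
  rw [filter_true_of_mem hf, Nat.odd_iff, Nat.odd_iff] at h
  omega

variable {V : Type*}

noncomputable def maxMembers (F : Finset (Finset V)) : Finset (Finset V) := by
  classical exact {M ∈ F | Maximal (· ∈ F) M}

@[simp]
lemma mem_maxMembers {F : Finset (Finset V)} {M : Finset V} :
    M ∈ maxMembers F ↔ Maximal (· ∈ F) M := by
  classical
  simp only [maxMembers, mem_filter, and_iff_right_iff_imp]
  exact Maximal.prop

variable [DecidableEq V]

lemma card_le_sum_card_filter_subset_maxMembers (F : Finset (Finset V)) :
    #F ≤ ∑ M ∈ maxMembers F, #{X ∈ F | X ⊆ M} := by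
  have hcover : F ⊆ (maxMembers F).biUnion (fun M ↦ {X ∈ F | X ⊆ M}) := by
    intro X hX
    obtain ⟨M, hXM, hM⟩ := F.exists_le_maximal hX
    exact mem_biUnion.2 ⟨M, mem_maxMembers.2 hM, mem_filter.2 ⟨hX, hXM⟩⟩
  exact (card_le_card hcover).trans card_biUnion_le

lemma card_filter_subset_eq_card_filter_ssubset_add_one {F : Finset (Finset V)} {M : Finset V}
    (hM : M ∈ F) : #{X ∈ F | X ⊆ M} = #{X ∈ F | X ⊂ M} + 1 := by
  have herase : {X ∈ F | X ⊂ M} = {X ∈ F | X ⊆ M}.erase M := by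
    ext X
    simp only [mem_erase, mem_filter, Finset.ssubset_iff_subset_ne]
    tauto
  have hMM : M ∈ {X ∈ F | X ⊆ M} := mem_filter.2 ⟨hM, Subset.rfl⟩
  rw [herase, card_erase_add_one hMM]

lemma two_mul_card_add_card_maxMembers_le_sum {F : Finset (Finset V)}
    (hroot : ∀ M ∈ maxMembers F, 2 * #{X ∈ F | X ⊆ M} + 1 ≤ #M) :
    2 * #F + #(maxMembers F) ≤ ∑ M ∈ maxMembers F, #M :=
  calc 2 * #F + #(maxMembers F)
      ≤ 2 * ∑ M ∈ maxMembers F, #{X ∈ F | X ⊆ M} + #(maxMembers F) := by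
        gcongr; exact card_le_sum_card_filter_subset_maxMembers F
    _ = ∑ M ∈ maxMembers F, (2 * #{X ∈ F | X ⊆ M} + 1) := by
        rw [sum_add_distrib, mul_sum, sum_const, smul_eq_mul, mul_one]
    _ ≤ ∑ M ∈ maxMembers F, #M := sum_le_sum hroot

end Finset

namespace Laminar

variable {V : Type*} [DecidableEq V] {F G : Finset (Finset V)}

lemma mono (hF : Laminar F) (hG : G ⊆ F) : Laminar G :=
  fun X hX Y hY ↦ hF X (hG hX) Y (hG hY)

lemma disjoint_of_maximal (hF : Laminar F) {M N : Finset V} (hM : Maximal (· ∈ F) M)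
    (hN : Maximal (· ∈ F) N) (hMN : M ≠ N) : Disjoint M N := by
  rcases hF M hM.prop N hN.prop with h | h | h
  · exact disjoint_iff_inter_eq_empty.2 h
  · exact absurd (hM.eq_of_le hN.prop h) hMN
  · exact absurd (hN.eq_of_le hM.prop h).symm hMN

lemma sum_card_maxMembers_le (hF : Laminar F) {U : Finset V} (hU : ∀ X ∈ F, X ⊆ U) :
    ∑ M ∈ maxMembers F, #M ≤ #U := by
  rw [← card_biUnion fun M hM N hN hMN ↦
    hF.disjoint_of_maximal (mem_maxMembers.1 hM) (mem_maxMembers.1 hN) hMN]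
  exact card_le_card (biUnion_subset.2 fun M hM ↦ hU M (mem_maxMembers.1 hM).prop)

lemma two_mul_card_filter_subset_add_one_le (hF : Laminar F)
    (hodd : ∀ S ∈ F, Odd #S) (hlow : ∀ S ∈ F, 3 ≤ #S) {M : Finset V} (hM : M ∈ F) :
    2 * #{X ∈ F | X ⊆ M} + 1 ≤ #M := by
  induction M using Finset.strongInduction with
  | H M ih =>
  have hcard := card_filter_subset_eq_card_filter_ssubset_add_one hM
  set G := {X ∈ F | X ⊂ M}
  have hGF : G ⊆ F := filter_subset _ _
  have hroot : ∀ N ∈ maxMembers G, 2 * #{X ∈ G | X ⊆ N} + 1 ≤ #N := by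
    intro N hN
    have hNG := mem_filter.1 (mem_maxMembers.1 hN).prop
    have hsub : {X ∈ G | X ⊆ N} ⊆ {X ∈ F | X ⊆ N} := filter_subset_filter _ hGF
    linarith [card_le_card hsub, ih N hNG.2 hNG.1]
  have hforest := two_mul_card_add_card_maxMembers_le_sum hroot
  have hsum_le := (hF.mono hGF).sum_card_maxMembers_le (U := M) fun X hX ↦ (mem_filter.1 hX).2.1
  have hparity := sum_mod_two_eq_card_mod_two (s := maxMembers G) (f := card) fun N hN ↦
    hodd N (hGF (mem_maxMembers.1 hN).prop)
  have hempty : #(maxMembers G) = 0 → ∑ N ∈ maxMembers G, #N = 0 := by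
    intro h; rw [card_eq_zero.1 h, sum_empty]
  have hsingle : #(maxMembers G) = 1 → ∑ N ∈ maxMembers G, #N < #M := by
    intro h
    obtain ⟨N, hN⟩ := card_eq_one.1 h
    have hNG : N ∈ G := mem_maxMembers.1 (hN ▸ mem_singleton_self N) |>.prop
    rw [hN, sum_singleton]
    exact card_lt_card (mem_filter.1 hNG).2
  have hModd := Nat.odd_iff.1 (hodd M hM)
  have hM3 := hlow M hM
  -- For `k = #(maxMembers G)`: `k ≥ 3` suffices as is, `k = 0` uses `3 ≤ #M`, `k = 1, 2` parity.
  omega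

end Laminar

theorem laminar_odd_family_card_le_general
    {V : Type*} [Fintype V] [DecidableEq V] (F : Finset (Finset V))
    (hlam : Laminar F)
    (hodd : ∀ S ∈ F, Odd S.card)
    (hlow : ∀ S ∈ F, 3 ≤ S.card) :
    2 * F.card ≤ Fintype.card V := by
  have hroot : ∀ M ∈ maxMembers F, 2 * #{X ∈ F | X ⊆ M} + 1 ≤ #M := fun M hM ↦
    hlam.two_mul_card_filter_subset_add_one_le hodd hlow (mem_maxMembers.1 hM).prop
  have hforest := two_mul_card_add_card_maxMembers_le_sum hroot
  have hsum_le := hlam.sum_card_maxMembers_le (U := univ) fun X _ ↦ subset_univ X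
  rw [card_univ] at hsum_le
  omega

/-- a laminar family of odd subsets of an `n`-element set, each of
size at least `3` and at most `n - 3`, has at most `n / 2` members. -/
theorem laminar_odd_family_card_le
    {V : Type*} [Fintype V] [DecidableEq V] (F : Finset (Finset V))
    (hlam : Laminar F)
    (hodd : ∀ S ∈ F, Odd S.card)
    (hlow : ∀ S ∈ F, 3 ≤ S.card)
    (hhigh : ∀ S ∈ F, S.card ≤ Fintype.card V - 3) :
    2 * F.card ≤ Fintype.card V :=
  laminar_odd_family_card_le_general F hlam hodd hlow
end

section
/- Let M be a perfect matching of S∖{u} for some u∈S. Then for any subset T ⊊ S with |T| odd, the number of matching edges crossing T satisfies |M∩δ(T)| ≡ |T∖{u}| (mod 2). In particular, if additionally |M∩δ(T)| ≤ 1, then |M∩δ(T)| = 1 if u ∈ S∖T and |M∩δ(T)| = 0 if u ∈ T. -/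
open Finset

/-- `M` is a perfect matching on the vertex set `U`: each member is an edge
(a 2-element set) with both endpoints in `U`, and every vertex of `U` lies in
exactly one member of `M`. -/
def IsPerfectMatchingOn {V : Type*} [DecidableEq V] (M : Finset (Finset V))
    (U : Finset V) : Prop :=
  (∀ e ∈ M, e.card = 2 ∧ e ⊆ U) ∧ ∀ v ∈ U, ∃! e, e ∈ M ∧ v ∈ e

/-- The set of edges of `M` crossing `T` (exactly one endpoint inside `T`). -/
def crossing {V : Type*} [DecidableEq V] (M : Finset (Finset V)) (T : Finset V) :
    Finset (Finset V) :=
  M.filter (fun e => (e ∩ T).card = 1)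

/-- if `M` is a perfect matching of `S \ {u}`, then for any `T ⊊ S`
with `|T|` odd, `|M ∩ δ(T)| ≡ |T \ {u}| (mod 2)`; in particular, if moreover
`|M ∩ δ(T)| ≤ 1`, then `|M ∩ δ(T)| = 1` when `u ∉ T` and `|M ∩ δ(T)| = 0` when
`u ∈ T`. -/
theorem matching_crossing_parity
    {V : Type*} [DecidableEq V] (S T : Finset V) (u : V) (hu : u ∈ S)
    (M : Finset (Finset V)) (hM : IsPerfectMatchingOn M (S.erase u))
    (hT : T ⊂ S) (hTodd : Odd T.card) :
    (crossing M T).card % 2 = (T.erase u).card % 2 ∧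
    ((crossing M T).card ≤ 1 →
      ((u ∉ T → (crossing M T).card = 1) ∧ (u ∈ T → (crossing M T).card = 0))) := by
  obtain ⟨hedge, hcov⟩ := hM
  have hTS : T ⊆ S := hT.subset
  -- count of edges containing v
  have hcount : ∀ v ∈ T, (M.filter (fun e => v ∈ e)).card =
      if v = u then 0 else 1 := by
    intro v hv
    by_cases hvu : v = u
    · subst hvu
      rw [if_pos rfl, Finset.card_eq_zero, Finset.filter_eq_empty_iff]
      intro e he hue
      exact (Finset.notMem_erase v S) ((hedge e he).2 hue)
    · simp only [if_neg hvu]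
      obtain ⟨e, ⟨heM, hve⟩, huniq⟩ := hcov v (Finset.mem_erase.mpr ⟨hvu, hTS hv⟩)
      rw [Finset.card_eq_one]
      exact ⟨e, Finset.eq_singleton_iff_unique_mem.mpr
        ⟨Finset.mem_filter.mpr ⟨heM, hve⟩,
         fun x hx => huniq x ⟨(Finset.mem_filter.mp hx).1, (Finset.mem_filter.mp hx).2⟩⟩⟩
  -- key sum identity
  have hsum : ∑ e ∈ M, (e ∩ T).card = (T.erase u).card := by
    have h1 : ∀ e ∈ M, (e ∩ T).card = ∑ v ∈ T, if v ∈ e then 1 else 0 := by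
      intro e _
      rw [← Finset.card_filter]
      congr 1
      ext x; simp [Finset.mem_inter, Finset.mem_filter, and_comm]
    rw [Finset.sum_congr rfl h1, Finset.sum_comm]
    have h2 : ∀ v ∈ T, (∑ e ∈ M, if v ∈ e then 1 else 0) = if v = u then 0 else 1 := by
      intro v hv
      rw [← Finset.card_filter]
      exact hcount v hv
    rw [Finset.sum_congr rfl h2]
    by_cases huT : u ∈ T
    · rw [← Finset.sum_erase_add _ _ huT, if_pos rfl, add_zero,
        Finset.sum_congr rfl (fun x hx => if_neg (Finset.ne_of_mem_erase hx)),
        Finset.sum_const, smul_eq_mul, mul_one]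
    · have : ∀ v ∈ T, (if v = u then 0 else 1) = 1 := by
        intro v hv; rw [if_neg]; rintro rfl; exact huT hv
      rw [Finset.sum_congr rfl this, Finset.sum_const, smul_eq_mul, mul_one,
        Finset.erase_eq_of_notMem huT]
  -- parity
  have hpar : (crossing M T).card % 2 = (T.erase u).card % 2 := by
    rw [← hsum, Finset.sum_nat_mod]
    have h3 : ∀ e ∈ M, (e ∩ T).card % 2 = if (e ∩ T).card = 1 then 1 else 0 := by
      intro e he
      have hle : (e ∩ T).card ≤ 2 := by
        calc (e ∩ T).card ≤ e.card := Finset.card_le_card (Finset.inter_subset_left)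
        _ = 2 := (hedge e he).1
      interval_cases h : (e ∩ T).card <;> simp
    rw [Finset.sum_congr rfl h3, ← Finset.card_filter]
    rfl
  refine ⟨hpar, fun hle1 => ⟨fun huT => ?_, fun huT => ?_⟩⟩
  · rw [Finset.erase_eq_of_notMem huT] at hpar
    obtain ⟨k, hk⟩ := hTodd
    omega
  · rw [Finset.card_erase_of_mem huT] at hpar
    obtain ⟨k, hk⟩ := hTodd
    omega
end

section
/- Let M_u and M_v be two matchings, each perfectly matching S∖{u} and S∖{v} respectively, such that each crosses every set T of a laminar family F of subsets of S at most once. If C is a cycle contained in the symmetric difference M_u Δ M_v, then the symmetric difference M_u Δ C is again a perfect matching of S∖{u} crossing every T ∈ F at most once. -/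
open Finset

/-- `C` is a cycle inside an edge set: every vertex covered by `C` lies in exactly
two edges of `C`, and `C` is nonempty. -/
def IsCycleEdgeSet {V : Type*} [DecidableEq V] (C : Finset (Finset V)) : Prop :=
  C.Nonempty ∧ (∀ e ∈ C, e.card = 2) ∧
    ∀ v : V, (∃ e ∈ C, v ∈ e) → (C.filter (fun e => v ∈ e)).card = 2

/-- if `M_u`, `M_v` perfectly match `S ∖ {u}` and `S ∖ {v}`
respectively, each crossing every member of a laminar family `F` of proper subsets
of `S` at most once, and `C` is a cycle contained in `M_u Δ M_v` avoiding `u` and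
`v`, then `M_u Δ C` is again a perfect matching of `S ∖ {u}` crossing every member
of `F` at most once. -/
theorem symmDiff_cycle_critical_matching
    {V : Type*} [DecidableEq V] (S : Finset V) (u v : V) (hu : u ∈ S) (hv : v ∈ S)
    (F : Finset (Finset V)) (hlam : Laminar F) (hF : ∀ T ∈ F, T ⊂ S)
    (Mu Mv C : Finset (Finset V))
    (hMu : IsPerfectMatchingOn Mu (S.erase u))
    (hMv : IsPerfectMatchingOn Mv (S.erase v))
    (hMuF : ∀ T ∈ F, (crossing Mu T).card ≤ 1)
    (hMvF : ∀ T ∈ F, (crossing Mv T).card ≤ 1)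
    (hC : IsCycleEdgeSet C) (hCsub : C ⊆ (Mu \ Mv) ∪ (Mv \ Mu))
    (hCu : ∀ e ∈ C, u ∉ e) (hCv : ∀ e ∈ C, v ∉ e) :
    IsPerfectMatchingOn ((Mu \ C) ∪ (C \ Mu)) (S.erase u) ∧
    ∀ T ∈ F, (crossing ((Mu \ C) ∪ (C \ Mu)) T).card ≤ 1 := by
  obtain ⟨hMu1, hMu2⟩ := hMu
  obtain ⟨hMv1, hMv2⟩ := hMv
  -- every edge of C lies in Mu ∪ Mv
  have hCMuv : ∀ e ∈ C, e ∈ Mu ∨ e ∈ Mv := by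
    intro e he
    rcases Finset.mem_union.1 (hCsub he) with h | h
    · exact Or.inl (Finset.mem_sdiff.1 h).1
    · exact Or.inr (Finset.mem_sdiff.1 h).1
  have hCsubS : ∀ e ∈ C, e ⊆ S.erase u := by
    intro e he x hx
    rw [Finset.mem_erase]
    refine ⟨fun h => hCu e he (h ▸ hx), ?_⟩
    rcases hCMuv e he with h | h
    · exact (Finset.erase_subset u S) ((hMu1 e h).2 hx)
    · exact (Finset.erase_subset v S) ((hMv1 e h).2 hx)
  constructor
  · constructor
    · intro e he
      rcases Finset.mem_union.1 he with h | h
      · exact hMu1 e (Finset.mem_sdiff.1 h).1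
      · obtain ⟨heC, _⟩ := Finset.mem_sdiff.1 h
        exact ⟨hC.2.1 e heC, hCsubS e heC⟩
    · intro w hw
      obtain ⟨eu, ⟨heu, hweu⟩, heu'⟩ := hMu2 w hw
      by_cases hwC : ∃ e ∈ C, w ∈ e
      · -- two C-edges through w; exactly one is in Mu
        obtain ⟨c1, c2, hne, hfilter⟩ := Finset.card_eq_two.1 (hC.2.2 w hwC)
        -- symmetric helper: if `a ∈ Mu` is one of the two C-edges at w
        have main : ∀ a b : Finset V, a ≠ b →
            C.filter (fun e => w ∈ e) = {a, b} → a ∈ Mu →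
            ∃! e, e ∈ (Mu \ C) ∪ (C \ Mu) ∧ w ∈ e := by
          intro a b hab hfil haMu
          have haf : a ∈ C ∧ w ∈ a := by
            have : a ∈ C.filter (fun e => w ∈ e) := by rw [hfil]; simp
            exact Finset.mem_filter.1 this
          have hbf : b ∈ C ∧ w ∈ b := by
            have : b ∈ C.filter (fun e => w ∈ e) := by rw [hfil]; simp
            exact Finset.mem_filter.1 this
          have haeu : a = eu := heu' a ⟨haMu, haf.2⟩
          have hbMu : b ∉ Mu := by
            intro hbMu
            exact hab (haeu.trans (heu' b ⟨hbMu, hbf.2⟩).symm)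
          refine ⟨b, ⟨Finset.mem_union.2 (Or.inr (Finset.mem_sdiff.2 ⟨hbf.1, hbMu⟩)),
            hbf.2⟩, ?_⟩
          rintro f ⟨hf, hwf⟩
          rcases Finset.mem_union.1 hf with h | h
          · obtain ⟨hfMu, hfC⟩ := Finset.mem_sdiff.1 h
            have hfa : f = a := (heu' f ⟨hfMu, hwf⟩).trans haeu.symm
            exact (hfC (hfa ▸ haf.1)).elim
          · obtain ⟨hfC, hfMu⟩ := Finset.mem_sdiff.1 h
            have : f ∈ ({a, b} : Finset (Finset V)) := by
              rw [← hfil]; exact Finset.mem_filter.2 ⟨hfC, hwf⟩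
            rcases Finset.mem_insert.1 this with h' | h'
            · exact absurd (h' ▸ haMu) hfMu
            · exact Finset.mem_singleton.1 h'
        have hc1f : c1 ∈ C ∧ w ∈ c1 := by
          have : c1 ∈ C.filter (fun e => w ∈ e) := by rw [hfilter]; simp
          exact Finset.mem_filter.1 this
        have hc2f : c2 ∈ C ∧ w ∈ c2 := by
          have : c2 ∈ C.filter (fun e => w ∈ e) := by rw [hfilter]; simp
          exact Finset.mem_filter.1 this
        by_cases h1 : c1 ∈ Mu
        · exact main c1 c2 hne hfilter h1
        · by_cases h2 : c2 ∈ Mu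
          · exact main c2 c1 hne.symm (by rw [hfilter, Finset.pair_comm]) h2
          · -- both в Mv: contradiction
            exfalso
            have hwv : w ≠ v := fun h => hCv c1 hc1f.1 (h ▸ hc1f.2)
            have hwSv : w ∈ S.erase v :=
              Finset.mem_erase.2 ⟨hwv, Finset.mem_of_mem_erase hw⟩
            obtain ⟨ev, _, hev'⟩ := hMv2 w hwSv
            have hc1v : c1 ∈ Mv := (hCMuv c1 hc1f.1).resolve_left h1
            have hc2v : c2 ∈ Mv := (hCMuv c2 hc2f.1).resolve_left h2
            exact hne ((hev' c1 ⟨hc1v, hc1f.2⟩).trans (hev' c2 ⟨hc2v, hc2f.2⟩).symm)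
      · -- w not covered by C
        have heuC : eu ∉ C := fun h => hwC ⟨eu, h, hweu⟩
        refine ⟨eu, ⟨Finset.mem_union.2 (Or.inl (Finset.mem_sdiff.2 ⟨heu, heuC⟩)),
          hweu⟩, ?_⟩
        rintro f ⟨hf, hwf⟩
        rcases Finset.mem_union.1 hf with h | h
        · exact heu' f ⟨(Finset.mem_sdiff.1 h).1, hwf⟩
        · exact absurd ⟨f, (Finset.mem_sdiff.1 h).1, hwf⟩ hwC
  · intro T hT
    have hA := hMuF T hT
    have hB := hMvF T hT
    set A := crossing Mu T with hAdef
    set B := crossing Mv T with hBdef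
    set D := crossing C T with hDdef
    have hDsub : D ⊆ A ∪ B := by
      intro e he
      obtain ⟨heC, hcard⟩ := Finset.mem_filter.1 he
      rcases hCMuv e heC with h | h
      · exact Finset.mem_union.2 (Or.inl (Finset.mem_filter.2 ⟨h, hcard⟩))
      · exact Finset.mem_union.2 (Or.inr (Finset.mem_filter.2 ⟨h, hcard⟩))
    have hcross_eq : crossing ((Mu \ C) ∪ (C \ Mu)) T = (A \ D) ∪ (D \ A) := by
      ext e
      simp only [hAdef, hDdef, crossing, Finset.mem_filter, Finset.mem_union,
        Finset.mem_sdiff]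
      tauto
    -- parity: D.card is even
    have hsum : ∑ e ∈ C, (e ∩ T).card = ∑ t ∈ T, (C.filter (fun e => t ∈ e)).card := by
      have h1 : ∀ e ∈ C, (e ∩ T).card = ∑ t ∈ T, if t ∈ e then 1 else 0 := by
        intro e _
        rw [← Finset.card_filter]
        congr 1
        ext x
        simp [Finset.mem_inter, Finset.mem_filter, and_comm]
      rw [Finset.sum_congr rfl h1, Finset.sum_comm]
      refine Finset.sum_congr rfl (fun t _ => ?_)
      rw [Finset.card_filter]
    have hevensum : Even (∑ e ∈ C, (e ∩ T).card) := by
      rw [hsum]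
      refine Finset.even_sum _ (fun t _ => ?_)
      by_cases h : ∃ e ∈ C, t ∈ e
      · rw [hC.2.2 t h]; exact even_two
      · rw [Finset.filter_eq_empty_iff.2 (by push_neg at h; exact h)]
        simp
    have hsplit := Finset.sum_filter_add_sum_filter_not C
      (fun e => (e ∩ T).card = 1) (fun e => (e ∩ T).card)
    have hDpart : ∑ e ∈ C.filter (fun e => (e ∩ T).card = 1), (e ∩ T).card = D.card := by
      rw [hDdef, crossing]
      rw [Finset.sum_congr rfl (fun e he => (Finset.mem_filter.1 he).2)]
      simp
    have hrest : Even (∑ e ∈ C.filter (fun e => ¬(e ∩ T).card = 1), (e ∩ T).card) := by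
      refine Finset.even_sum _ (fun e he => ?_)
      obtain ⟨heC, hne1⟩ := Finset.mem_filter.1 he
      have hle : (e ∩ T).card ≤ 2 := by
        calc (e ∩ T).card ≤ e.card := Finset.card_le_card Finset.inter_subset_left
        _ = 2 := hC.2.1 e heC
      interval_cases h : (e ∩ T).card
      · simp
      · exact absurd rfl hne1
      · exact even_two
    have hDeven : Even D.card := by
      rw [← hsplit, hDpart] at hevensum
      rcases hrest with ⟨k, hk⟩
      rcases hevensum with ⟨m, hm⟩
      exact ⟨m - k, by omega⟩
    rw [hcross_eq]
    by_cases hD : D = ∅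
    · rw [hD]
      simpa using hA
    · have hD1 : 1 ≤ D.card := Finset.card_pos.2 (Finset.nonempty_iff_ne_empty.2 hD)
      have hABle : (A ∪ B).card ≤ 2 := by
        calc (A ∪ B).card ≤ A.card + B.card := Finset.card_union_le A B
        _ ≤ 2 := by omega
      have hDle : D.card ≤ 2 := le_trans (Finset.card_le_card hDsub) hABle
      have hD2 : D.card = 2 := by
        rcases hDeven with ⟨k, hk⟩; omega
      have hDeq : D = A ∪ B := Finset.eq_of_subset_of_card_le hDsub (by omega)
      have hAB : (A ∪ B).card = 2 := by rw [← hDeq]; exact hD2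
      have hint := Finset.card_union_add_card_inter A B
      have hAcard : A.card = 1 := by
        have hABint : (A ∩ B).card ≤ A.card := Finset.card_le_card Finset.inter_subset_left
        omega
      have hAsub : A ⊆ D := by rw [hDeq]; exact Finset.subset_union_left
      rw [Finset.sdiff_eq_empty_iff_subset.2 hAsub, Finset.empty_union,
        Finset.card_sdiff_of_subset hAsub]
      omega
end

section
/- If a set S is (H,F)-factor-critical (for every u∈S there is an F-matching of H perfectly matching S∖{u}), then every set T ∈ F with T ⊆ S is also (H,F)-factor-critical. -/
open Finset

/-- `M` is an `F`-matching using edges of `H` that perfectly matches `U` (and no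
other vertices): its members are edges of `H` with both endpoints in `U`, every
vertex of `U` lies in exactly one member, and `M` crosses every member of `F` at
most once. -/
def IsFPerfectMatchingOn {V : Type*} [DecidableEq V] (H : Finset (Finset V))
    (F : Finset (Finset V)) (M : Finset (Finset V)) (U : Finset V) : Prop :=
  (∀ e ∈ M, e ∈ H ∧ e.card = 2 ∧ e ⊆ U) ∧
  (∀ v ∈ U, ∃! e, e ∈ M ∧ v ∈ e) ∧
  (∀ T ∈ F, (M.filter (fun e => (e ∩ T).card = 1)).card ≤ 1)

/-- `S` is `(H,F)`-factor-critical. -/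
def IsFactorCritical {V : Type*} [DecidableEq V] (H : Finset (Finset V))
    (F : Finset (Finset V)) (S : Finset V) : Prop :=
  ∀ u ∈ S, ∃ M, IsFPerfectMatchingOn H F M (S.erase u)

/-- if `S` is `(H,F)`-factor-critical then every `T ∈ F` with
`T ⊆ S` is also `(H,F)`-factor-critical. -/
theorem factor_critical_of_subset
    {V : Type*} [DecidableEq V] (H : Finset (Finset V)) (F : Finset (Finset V))
    (hlam : Laminar F) (hodd : ∀ T ∈ F, Odd T.card)
    (hedges : ∀ e ∈ H, e.card = 2)
    (S : Finset V) (hSF : S ∈ F) (hS : IsFactorCritical H F S)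
    (T : Finset V) (hT : T ∈ F) (hTS : T ⊆ S) :
    IsFactorCritical H F T := by
  intro u hu
  obtain ⟨M, hMH, hMcov, hMF⟩ := hS u (hTS hu)
  have hucov : ∀ e ∈ M, u ∉ e := fun e he hue =>
    (Finset.notMem_erase u S) ((hMH e he).2.2 hue)
  -- the total number of incidences between edges of M and T is |T| - 1
  have hsum : ∑ e ∈ M, (e ∩ T).card = T.card - 1 := by
    have h1 : ∀ e ∈ M, (e ∩ T).card = ∑ v ∈ T, if v ∈ e then 1 else 0 := by
      intro e he
      rw [Finset.inter_comm, ← Finset.filter_mem_eq_inter, Finset.card_filter]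
    rw [Finset.sum_congr rfl h1, Finset.sum_comm]
    have h2 : ∀ v ∈ T, (∑ e ∈ M, if v ∈ e then 1 else 0) =
        (M.filter (fun e => v ∈ e)).card := by
      intro v _; rw [Finset.card_filter]
    rw [Finset.sum_congr rfl h2, ← Finset.sum_erase_add T _ hu]
    have h3 : (M.filter (fun e => u ∈ e)).card = 0 := by
      rw [Finset.card_eq_zero, Finset.filter_eq_empty_iff]
      exact hucov
    have h4 : ∀ v ∈ T.erase u, (M.filter (fun e => v ∈ e)).card = 1 := by
      intro v hv
      obtain ⟨e, ⟨heM, hve⟩, huniq⟩ :=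
        hMcov v (Finset.mem_erase.mpr ⟨(Finset.mem_erase.mp hv).1,
          hTS (Finset.mem_of_mem_erase hv)⟩)
      rw [Finset.card_eq_one]
      refine ⟨e, Finset.eq_singleton_iff_unique_mem.mpr ⟨Finset.mem_filter.mpr ⟨heM, hve⟩, ?_⟩⟩
      intro e' he'
      have := Finset.mem_filter.mp he'
      exact huniq e' ⟨this.1, this.2⟩
    rw [Finset.sum_congr rfl h4, h3, Finset.sum_const, smul_eq_mul, mul_one,
      Finset.card_erase_of_mem hu, add_zero]
  -- no edge crosses T
  have hB : M.filter (fun e => (e ∩ T).card = 1) = ∅ := by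
    have hle2 : ∀ e ∈ M, (e ∩ T).card ≤ 2 := by
      intro e he
      calc (e ∩ T).card ≤ e.card := Finset.card_le_card (Finset.inter_subset_left)
        _ = 2 := (hMH e he).2.1
    have hsplit := Finset.sum_filter_add_sum_filter_not M (fun e => (e ∩ T).card = 1)
      (fun e => (e ∩ T).card)
    have hA : ∑ e ∈ M.filter (fun e => (e ∩ T).card = 1), (e ∩ T).card =
        (M.filter (fun e => (e ∩ T).card = 1)).card := by
      rw [Finset.sum_congr rfl (fun e he => (Finset.mem_filter.mp he).2)]
      simp
    have hEv : Even (∑ e ∈ M.filter (fun e => ¬ (e ∩ T).card = 1), (e ∩ T).card) := by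
      apply Finset.even_sum
      intro e he
      obtain ⟨heM, hne⟩ := Finset.mem_filter.mp he
      have := hle2 e heM
      have h02 : (e ∩ T).card = 0 ∨ (e ∩ T).card = 2 := by omega
      rcases h02 with h | h <;> rw [h]
      · exact ⟨0, rfl⟩
      · exact ⟨1, rfl⟩
    have hEvTot : Even (T.card - 1) := by
      obtain ⟨k, hk⟩ := hodd T hT
      exact ⟨k, by omega⟩
    have hEvB : Even (M.filter (fun e => (e ∩ T).card = 1)).card := by
      rw [hsum] at hsplit
      rcases hEvTot with ⟨a, ha⟩; rcases hEv with ⟨b, hb⟩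
      refine ⟨a - b, ?_⟩
      first
      | omega
      | (rw [hA] at hsplit; omega)
    have hle1 := hMF T hT
    rw [← Finset.card_eq_zero]
    rcases hEvB with ⟨c, hc⟩
    omega
  -- key: every edge of M meeting T lies inside T
  have hkey : ∀ e ∈ M, ∀ v ∈ e, v ∈ T → e ⊆ T := by
    intro e he v hve hvT
    have hne : (e ∩ T).card ≠ 1 := by
      intro h
      have : e ∈ M.filter (fun e => (e ∩ T).card = 1) := Finset.mem_filter.mpr ⟨he, h⟩
      rw [hB] at this
      exact absurd this (Finset.notMem_empty e)
    have hle2 : (e ∩ T).card ≤ e.card := Finset.card_le_card (Finset.inter_subset_left)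
    have hpos : 0 < (e ∩ T).card :=
      Finset.card_pos.mpr ⟨v, Finset.mem_inter.mpr ⟨hve, hvT⟩⟩
    have hcard2 := (hMH e he).2.1
    have : (e ∩ T).card = e.card := by omega
    have heq : e ∩ T = e := Finset.eq_of_subset_of_card_le Finset.inter_subset_left this.ge
    intro x hx
    rw [← heq] at hx
    exact (Finset.mem_inter.mp hx).2
  refine ⟨M.filter (fun e => e ⊆ T), ?_, ?_, ?_⟩
  · intro e he
    obtain ⟨heM, heT⟩ := Finset.mem_filter.mp he
    exact ⟨(hMH e heM).1, (hMH e heM).2.1,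
      Finset.subset_erase.mpr ⟨heT, hucov e heM⟩⟩
  · intro v hv
    obtain ⟨hvu, hvT⟩ := Finset.mem_erase.mp hv
    obtain ⟨e, ⟨heM, hve⟩, huniq⟩ :=
      hMcov v (Finset.mem_erase.mpr ⟨hvu, hTS hvT⟩)
    refine ⟨e, ⟨Finset.mem_filter.mpr ⟨heM, hkey e heM v hve hvT⟩, hve⟩, ?_⟩
    intro e' ⟨he', hve'⟩
    exact huniq e' ⟨(Finset.mem_filter.mp he').1, hve'⟩
  · intro X hX
    calc ((M.filter (fun e => e ⊆ T)).filter (fun e => (e ∩ X).card = 1)).card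
        ≤ (M.filter (fun e => (e ∩ X).card = 1)).card :=
          Finset.card_le_card (Finset.filter_subset_filter _ (Finset.filter_subset _ _))
      _ ≤ 1 := hMF X hX
end

section
/- Let a,b : E → ℝ≥0 satisfy a(δ(v)) = b(δ(v)) for every vertex v. If a ≠ b, then there exists an even-length closed walk C in G such that a(e) > 0 on every edge of C at odd positions and b(e) > 0 on every edge at even positions. -/
open Finset SimpleGraph

/-- if two nonnegative edge-weight vectors `a` and `b` on a graph `G`
have equal weighted degrees at every vertex but are not identical (on the edges of
`G`), then there is an even closed walk in `G` on which, alternately, `a` is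
positive on the odd-position edges and `b` is positive on the even-position
edges. -/
theorem even_alternating_closed_walk_of_equal_degrees
    {V : Type*} [Fintype V] [DecidableEq V] (G : SimpleGraph V) [DecidableRel G.Adj]
    (a b : Sym2 V → ℝ)
    (ha : ∀ e, 0 ≤ a e) (hb : ∀ e, 0 ≤ b e)
    (hasupp : ∀ e, e ∉ G.edgeSet → a e = 0) (hbsupp : ∀ e, e ∉ G.edgeSet → b e = 0)
    (hdeg : ∀ v : V, ∑ e ∈ G.incidenceFinset v, a e = ∑ e ∈ G.incidenceFinset v, b e)
    (hne : a ≠ b) :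
    ∃ (v : V) (p : G.Walk v v), p.length ≠ 0 ∧ Even p.length ∧
      ∀ (i : ℕ) (h : i < p.edges.length),
        (Even i → 0 < a (p.edges[i]'h)) ∧ (Odd i → 0 < b (p.edges[i]'h)) := by
  classical
  set c : ℕ → Sym2 V → ℝ := fun n => if Even n then a else b with hc
  have hcnn : ∀ n e, 0 ≤ c n e := by
    intro n e
    simp only [hc]
    split
    · exact ha e
    · exact hb e
  have hsum : ∀ (v : V) (n : ℕ),
      ∑ e ∈ G.incidenceFinset v, c n e = ∑ e ∈ G.incidenceFinset v, c (n + 1) e := by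
    intro v n
    rcases Nat.even_or_odd n with h | h
    · have h1 : c n = a := by simp [hc, h]
      have h2 : c (n + 1) = b := by simp [hc, Nat.even_add_one, h]
      rw [h1, h2]; exact hdeg v
    · have h' : ¬ Even n := Nat.not_even_iff_odd.mpr h
      have h1 : c n = b := by simp [hc, h']
      have h2 : c (n + 1) = a := by simp [hc, Nat.even_add_one, h']
      rw [h1, h2]; exact (hdeg v).symm
  have hstep : ∀ (v : V) (n : ℕ), ∃ w : V,
      0 < ∑ e ∈ G.incidenceFinset v, c n e →
        G.Adj v w ∧ 0 < c n s(v, w) ∧ 0 < ∑ e ∈ G.incidenceFinset w, c (n + 1) e := by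
    intro v n
    by_cases hp : 0 < ∑ e ∈ G.incidenceFinset v, c n e
    · obtain ⟨e, he, hepos⟩ :=
        Finset.exists_lt_of_sum_lt (f := fun _ => (0 : ℝ)) (g := c n) (by simpa using hp)
      rw [SimpleGraph.mem_incidenceFinset] at he
      obtain ⟨hedge, hv⟩ := he
      obtain ⟨w, rfl⟩ := Sym2.mem_iff_exists.mp hv
      refine ⟨w, fun _ => ⟨(SimpleGraph.mem_edgeSet G).mp hedge, hepos, ?_⟩⟩
      rw [← hsum]
      refine Finset.sum_pos' (fun e _ => hcnn n e) ⟨s(v, w), ?_, hepos⟩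
      rw [SimpleGraph.mem_incidenceFinset]
      exact G.mk'_mem_incidenceSet_right_iff.mpr ((SimpleGraph.mem_edgeSet G).mp hedge)
    · exact ⟨v, fun h => absurd h hp⟩
  choose nxt hnxt using hstep
  -- find a starting vertex
  have hex : ∃ e, a e ≠ b e := by
    by_contra h
    push_neg at h
    exact hne (funext h)
  obtain ⟨e0, hne0⟩ := hex
  have he0 : e0 ∈ G.edgeSet := by
    by_contra h
    exact hne0 (by rw [hasupp e0 h, hbsupp e0 h])
  revert hne0 he0
  induction e0 using Sym2.ind with
  | _ u w =>
  intro hne0 he0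
  have hmem : s(u, w) ∈ G.incidenceFinset u := by
    rw [SimpleGraph.mem_incidenceFinset]
    exact G.mk'_mem_incidenceSet_left_iff.mpr ((SimpleGraph.mem_edgeSet G).mp he0)
  have hasum : 0 < ∑ e ∈ G.incidenceFinset u, a e := by
    rcases hne0.lt_or_gt with h | h
    · rw [hdeg u]
      exact Finset.sum_pos' (fun e _ => hb e) ⟨s(u, w), hmem, (ha _).trans_lt h⟩
    · exact Finset.sum_pos' (fun e _ => ha e) ⟨s(u, w), hmem, (hb _).trans_lt h⟩
  -- the infinite alternating sequence of vertices
  let f : ℕ → V := fun n => Nat.rec (motive := fun _ => V) u (fun n v => nxt v n) n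
  have key : ∀ n, 0 < ∑ e ∈ G.incidenceFinset (f n), c n e := by
    intro n
    induction n with
    | zero =>
      show 0 < ∑ e ∈ G.incidenceFinset u, c 0 e
      have h1 : c 0 = a := by simp [hc]
      rw [h1]; exact hasum
    | succ n ih => exact (hnxt (f n) n ih).2.2
  have hadj : ∀ n, G.Adj (f n) (f (n + 1)) := fun n => (hnxt (f n) n (key n)).1
  have hpos : ∀ n, 0 < c n s(f n, f (n + 1)) := fun n => (hnxt (f n) n (key n)).2.1
  -- walks along the sequence
  have walkTo : ∀ (d s : ℕ), ∃ p : G.Walk (f s) (f (s + d)), p.length = d ∧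
      ∀ k (hk : k < p.edges.length), p.edges[k]'hk = s(f (s + k), f (s + k + 1)) := by
    intro d
    induction d with
    | zero => exact fun s => ⟨SimpleGraph.Walk.nil, rfl, by simp⟩
    | succ d ih =>
      intro s
      obtain ⟨p, hlen, hedges⟩ := ih (s + 1)
      refine ⟨SimpleGraph.Walk.cons (hadj s) (p.copy rfl (congrArg f (show s + 1 + d = s + (d + 1) by omega))), ?_, ?_⟩
      · simp [hlen]
      · intro k hk
        cases k with
        | zero => simp
        | succ k =>
          have hk' : k < p.edges.length := by
            have h2 := hk
            simp only [SimpleGraph.Walk.edges_cons, SimpleGraph.Walk.edges_copy,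
              List.length_cons] at h2
            exact Nat.lt_of_succ_lt_succ h2
          simp only [SimpleGraph.Walk.edges_cons, SimpleGraph.Walk.edges_copy]
          rw [List.getElem_cons_succ]
          rw [hedges k hk']
          have e1 : s + 1 + k = s + (k + 1) := by omega
          rw [e1]
  -- pigeonhole on even positions
  obtain ⟨i, j, hij, hfeq⟩ := Fintype.exists_ne_map_eq_of_card_lt
    (fun i : Fin (Fintype.card V + 1) => f (2 * (i : ℕ))) (by simp)
  wlog hij' : (i : ℕ) < (j : ℕ) generalizing i j
  · exact this j i hij.symm hfeq.symm (by omega)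
  obtain ⟨p, hlen, hedges⟩ := walkTo (2 * (j : ℕ) - 2 * (i : ℕ)) (2 * (i : ℕ))
  have hend : f (2 * (i : ℕ) + (2 * (j : ℕ) - 2 * (i : ℕ))) = f (2 * (i : ℕ)) :=
    (congrArg f (show 2 * (i : ℕ) + (2 * (j : ℕ) - 2 * (i : ℕ)) = 2 * (j : ℕ) by omega)).trans
      hfeq.symm
  refine ⟨f (2 * (i : ℕ)), p.copy rfl hend, ?_, ?_, ?_⟩
  · rw [SimpleGraph.Walk.length_copy, hlen]; omega
  · rw [SimpleGraph.Walk.length_copy, hlen]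
    exact ⟨(j : ℕ) - (i : ℕ), by omega⟩
  · intro k hk
    simp only [SimpleGraph.Walk.edges_copy] at hk ⊢
    rw [hedges k hk]
    have hp := hpos (2 * (i : ℕ) + k)
    constructor
    · intro hev
      have : Even (2 * (i : ℕ) + k) := by
        rcases hev with ⟨m, rfl⟩; exact ⟨(i : ℕ) + m, by ring⟩
      simpa [hc, this] using hp
    · intro hodd
      have : ¬ Even (2 * (i : ℕ) + k) := by
        rw [Nat.not_even_iff_odd]
        rcases hodd with ⟨m, rfl⟩; exact ⟨(i : ℕ) + m, by ring⟩
      simpa [hc, this] using hp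
end

section
/- Let F be a critical family (laminar odd family admitting an F-critical dual Π, i.e., every S∈F is (Π,F)-factor-critical and Π(T)>0 for all non-maximal T∈F). Then any downward-closed subfamily H ⊆ F (i.e., S⊆T, T∈H, S∈F imply S∈H) is also a critical family. -/
open Finset

open Classical in
/-- The left-hand side of the dual constraint for the (ordered) edge `uv`: the sum
of dual values over singletons and members of `F` whose boundary contains `uv`. -/
noncomputable def dualSum {V : Type*} [Fintype V] [DecidableEq V]
    (F : Finset (Finset V)) (Pi : Finset V → ℝ) (u v : V) : ℝ :=
  Pi {u} + Pi {v} +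
    ∑ S ∈ F.filter (fun S => (u ∈ S ∧ v ∉ S) ∨ (u ∉ S ∧ v ∈ S)), Pi S

/-- Feasibility for the dual `D_F(G,c)` of the blossom LP. -/
def DualFeasible {V : Type*} [Fintype V] [DecidableEq V] (G : SimpleGraph V)
    (c : Sym2 V → ℝ) (F : Finset (Finset V)) (Pi : Finset V → ℝ) : Prop :=
  (∀ S ∈ F, 0 ≤ Pi S) ∧ ∀ u v : V, G.Adj u v → dualSum F Pi u v ≤ c s(u, v)

/-- The edge `uv` is tight for the dual solution `Pi`. -/
def TightEdge {V : Type*} [Fintype V] [DecidableEq V] (G : SimpleGraph V)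
    (c : Sym2 V → ℝ) (F : Finset (Finset V)) (Pi : Finset V → ℝ) (u v : V) : Prop :=
  G.Adj u v ∧ dualSum F Pi u v = c s(u, v)

open Classical in
/-- The edges of `M` crossing `T`. -/
noncomputable def crossSym {V : Type*} [DecidableEq V] (M : Finset (Sym2 V))
    (T : Finset V) : Finset (Sym2 V) :=
  M.filter (fun e => ∃ a b : V, e = s(a, b) ∧ a ∈ T ∧ b ∉ T)

/-- `M` is a `Pi`-critical matching for `u` inside `S`: a matching of `Pi`-tight
edges perfectly matching `S ∖ {u}` and crossing every member of `F` at most once. -/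
def IsCriticalMatching {V : Type*} [Fintype V] [DecidableEq V] (G : SimpleGraph V)
    (c : Sym2 V → ℝ) (F : Finset (Finset V)) (Pi : Finset V → ℝ)
    (S : Finset V) (u : V) (M : Finset (Sym2 V)) : Prop :=
  (∀ e ∈ M, ∃ a b : V, e = s(a, b) ∧ TightEdge G c F Pi a b) ∧
  (∀ e ∈ M, ∀ w ∈ e, w ∈ S.erase u) ∧
  (∀ w ∈ S.erase u, ∃! e, e ∈ M ∧ w ∈ e) ∧
  (∀ T ∈ F, (crossSym M T).card ≤ 1)

/-- `S` is `(Pi,F)`-factor-critical. -/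
def IsPiFactorCritical {V : Type*} [Fintype V] [DecidableEq V] (G : SimpleGraph V)
    (c : Sym2 V → ℝ) (F : Finset (Finset V)) (Pi : Finset V → ℝ)
    (S : Finset V) : Prop :=
  ∀ u ∈ S, ∃ M, IsCriticalMatching G c F Pi S u M


/-- `Pi` is an `F`-critical dual: it is feasible for `D_F(G,c)`, every member of
`F` is `(Pi,F)`-factor-critical, and `Pi(T) > 0` for every non-maximal `T ∈ F`. -/
def IsFCriticalDual {V : Type*} [Fintype V] [DecidableEq V] (G : SimpleGraph V)
    (c : Sym2 V → ℝ) (F : Finset (Finset V)) (Pi : Finset V → ℝ) : Prop :=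
  DualFeasible G c F Pi ∧
  (∀ S ∈ F, IsPiFactorCritical G c F Pi S) ∧
  (∀ T ∈ F, (∃ S ∈ F, T ⊂ S) → 0 < Pi T)

/-- `F` is a critical family: a laminar family of odd sets of size at least three
admitting an `F`-critical dual. -/
def IsCriticalFamily {V : Type*} [Fintype V] [DecidableEq V] (G : SimpleGraph V)
    (c : Sym2 V → ℝ) (F : Finset (Finset V)) : Prop :=
  Laminar F ∧ (∀ S ∈ F, Odd S.card ∧ 3 ≤ S.card) ∧
  ∃ Pi : Finset V → ℝ, IsFCriticalDual G c F Pi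

/-- a downward-closed subfamily of a critical family is itself a
critical family. -/
theorem downward_closed_subfamily_critical
    {V : Type*} [Fintype V] [DecidableEq V] (G : SimpleGraph V) (c : Sym2 V → ℝ)
    (F H : Finset (Finset V))
    (hF : IsCriticalFamily G c F)
    (hHF : H ⊆ F)
    (hdc : ∀ S ∈ F, ∀ T ∈ H, S ⊆ T → S ∈ H) :
    IsCriticalFamily G c H := by
  classical
  obtain ⟨hlam, hodd, Pi, ⟨⟨hnn, hfeas⟩, hfc, hpos⟩⟩ := hF
  set Pi' : Finset V → ℝ := fun S => if S ∈ F ∧ S ∉ H then 0 else Pi S with hPi'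
  have hPi'H : ∀ S ∈ H, Pi' S = Pi S := by
    intro S hS
    simp [hPi', hS]
  have hPi'single : ∀ u : V, Pi' {u} = Pi {u} := by
    intro u
    have : ({u} : Finset V) ∉ F := by
      intro h
      have := (hodd _ h).2
      simp at this
    simp [hPi', this]
  -- key lemma: for an edge with both endpoints in some S ∈ H, the crossing sets
  -- in F are exactly those in H, hence the dual sums agree.
  have hkey : ∀ S ∈ H, ∀ a ∈ S, ∀ b ∈ S,
      dualSum H Pi' a b = dualSum F Pi a b := by
    intro S hS a ha b hb
    have hfilt : H.filter (fun T => (a ∈ T ∧ b ∉ T) ∨ (a ∉ T ∧ b ∈ T))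
        = F.filter (fun T => (a ∈ T ∧ b ∉ T) ∨ (a ∉ T ∧ b ∈ T)) := by
      apply Finset.ext
      intro T
      simp only [Finset.mem_filter]
      constructor
      · rintro ⟨hT, hcross⟩; exact ⟨hHF hT, hcross⟩
      · rintro ⟨hT, hcross⟩
        refine ⟨?_, hcross⟩
        rcases hlam T hT S (hHF hS) with hdisj | hsub | hsub
        · exfalso
          rcases hcross with ⟨h1, _⟩ | ⟨_, h2⟩
          · have : a ∈ T ∩ S := Finset.mem_inter.2 ⟨h1, ha⟩
            simp [hdisj] at this
          · have : b ∈ T ∩ S := Finset.mem_inter.2 ⟨h2, hb⟩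
            simp [hdisj] at this
        · exact hdc T hT S hS hsub
        · exfalso
          rcases hcross with ⟨_, h2⟩ | ⟨h1, _⟩
          · exact h2 (hsub hb)
          · exact h1 (hsub ha)
    unfold dualSum
    rw [hPi'single, hPi'single, hfilt]
    congr 1
    apply Finset.sum_congr rfl
    intro T hT
    rw [← hfilt] at hT
    exact hPi'H T (Finset.mem_filter.1 hT).1
  refine ⟨fun X hX Y hY => hlam X (hHF hX) Y (hHF hY),
    fun S hS => hodd S (hHF hS), Pi', ⟨⟨?_, ?_⟩, ?_, ?_⟩⟩
  · intro S hS
    rw [hPi'H S hS]; exact hnn S (hHF hS)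
  · intro u v huv
    refine le_trans ?_ (hfeas u v huv)
    unfold dualSum
    rw [hPi'single, hPi'single]
    have hsub : H.filter (fun T => (u ∈ T ∧ v ∉ T) ∨ (u ∉ T ∧ v ∈ T))
        ⊆ F.filter (fun T => (u ∈ T ∧ v ∉ T) ∨ (u ∉ T ∧ v ∈ T)) :=
      Finset.filter_subset_filter _ hHF
    have : ∑ T ∈ H.filter (fun T => (u ∈ T ∧ v ∉ T) ∨ (u ∉ T ∧ v ∈ T)), Pi' T
        = ∑ T ∈ H.filter (fun T => (u ∈ T ∧ v ∉ T) ∨ (u ∉ T ∧ v ∈ T)), Pi T := by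
      apply Finset.sum_congr rfl
      intro T hT
      exact hPi'H T (Finset.mem_filter.1 hT).1
    rw [this]
    have h2 : ∑ T ∈ H.filter (fun T => (u ∈ T ∧ v ∉ T) ∨ (u ∉ T ∧ v ∈ T)), Pi T
        ≤ ∑ T ∈ F.filter (fun T => (u ∈ T ∧ v ∉ T) ∨ (u ∉ T ∧ v ∈ T)), Pi T := by
      apply Finset.sum_le_sum_of_subset_of_nonneg hsub
      intro T hT _
      exact hnn T (Finset.mem_filter.1 hT).1
    linarith
  · -- factor-criticality
    intro S hS u hu
    obtain ⟨M, htight, hin, huniq, hcross⟩ := hfc S (hHF hS) u hu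
    refine ⟨M, ?_, hin, huniq, fun T hT => hcross T (hHF hT)⟩
    intro e he
    obtain ⟨a, b, rfl, hadj, hds⟩ := htight e he
    have ha : a ∈ S := Finset.mem_of_mem_erase (hin _ he a (by simp))
    have hb : b ∈ S := Finset.mem_of_mem_erase (hin _ he b (by simp))
    exact ⟨a, b, rfl, hadj, by rw [hkey S hS a ha b hb]; exact hds⟩
  · intro T hT ⟨S, hSH, hTS⟩
    rw [hPi'H T hT]
    exact hpos T (hHF hT) ⟨S, hHF hSH, hTS⟩
end

section
/- Let x ∈ ℝ^E satisfy x(δ(u))=1 for all u∈V, x ≥ 0, and let A⁻, A⁺ be disjoint subsets of a set S ⊆ V such that every support edge of x inside S with an endpoint in A⁻ has its other endpoint in A⁺, and x(δ(S))=1. Then |A⁻| ≤ x(δ(A⁻, V∖S)) + |A⁺| ≤ 1 + |A⁺|. Consequently, if |A⁻| = 1 + |A⁺|, then x(δ(A⁻, V∖S)) = 1, i.e., all of x's flow leaving S comes from A⁻. -/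
/-!
Double counting: since `x(δ(u)) = 1`, `|A| = ∑ₑ |A ∩ e| xₑ` for every vertex set `A`. A support
edge meeting `A⁻` either leaves `S`, and then has exactly one endpoint in `A⁻` (as `A⁻ ⊆ S`), or
stays inside `S`, and then each of its endpoints in `A⁻` forces the other one into `A⁺`, so it
meets `A⁺` at least as often as `A⁻`. Summing over edges gives `|A⁻| ≤ x(δ(A⁻, V∖S)) + |A⁺|`,
and `δ(A⁻, V∖S) ⊆ δ(S)` bounds the middle term by `1`.
-/

open Finset

theorem Sym2.card_filter_mem_mk {V : Type*} [DecidableEq V] {a b : V} (hab : a ≠ b)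
    (A : Finset V) :
    #{u ∈ A | u ∈ s(a, b)} = (if a ∈ A then 1 else 0) + (if b ∈ A then 1 else 0) := by
  simp only [Sym2.mem_iff]
  rw [filter_or, filter_eq', filter_eq']
  by_cases ha : a ∈ A <;> by_cases hb : b ∈ A <;> simp [ha, hb, card_pair hab]

theorem Sym2.card_filter_mem_mk_le_one {V : Type*} [DecidableEq V] {A : Finset V} {a b : V}
    (hb : b ∉ A) : #{u ∈ A | u ∈ s(a, b)} ≤ 1 :=
  card_le_one.mpr fun u hu v hv => by
    simp only [mem_filter, Sym2.mem_iff] at hu hv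
    grind

theorem Sym2.card_filter_mem_mk_le_card_filter_mem_mk {V : Type*} [DecidableEq V]
    {A B : Finset V} {a b : V} (hab : a ≠ b) (ha : a ∈ A → b ∈ B) (hb : b ∈ A → a ∈ B) :
    #{u ∈ A | u ∈ s(a, b)} ≤ #{u ∈ B | u ∈ s(a, b)} := by
  rw [card_filter_mem_mk hab, card_filter_mem_mk hab]
  split_ifs <;> simp_all

theorem Sym2.card_filter_mem_mul_le_of_crossing {V : Type*} [DecidableEq V] {x : Sym2 V → ℝ}
    (hx0 : ∀ e, 0 ≤ x e) {S A : Finset V} (hAS : A ⊆ S) {e : Sym2 V}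
    (hcross : ∃ a b, e = s(a, b) ∧ a ∈ A ∧ b ∉ S) :
    (#{u ∈ A | u ∈ e} : ℝ) * x e ≤ x e := by
  obtain ⟨a, b, rfl, -, hb⟩ := hcross
  have hcard := Sym2.card_filter_mem_mk_le_one (A := A) (a := a) (fun h => hb (hAS h))
  exact mul_le_of_le_one_left (hx0 _) (by exact_mod_cast hcard)

namespace SimpleGraph

variable {V : Type*} [Fintype V] [DecidableEq V] (G : SimpleGraph V) [DecidableRel G.Adj]

theorem sum_edgeFinset_card_filter_mem_mul_eq_card {x : Sym2 V → ℝ}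
    (hxdeg : ∀ v, ∑ e ∈ G.incidenceFinset v, x e = 1) (A : Finset V) :
    ∑ e ∈ G.edgeFinset, (#{u ∈ A | u ∈ e} : ℝ) * x e = #A := by
  calc ∑ e ∈ G.edgeFinset, (#{u ∈ A | u ∈ e} : ℝ) * x e
      = ∑ u ∈ A, ∑ e ∈ G.incidenceFinset u, x e := by
        simp_rw [incidenceFinset_eq_filter, sum_filter]
        rw [sum_comm]
        refine sum_congr rfl fun e _ => ?_
        rw [← sum_filter, sum_const, nsmul_eq_mul]
    _ = #A := by simp [hxdeg]

theorem card_filter_mem_mul_le_of_not_crossing {x : Sym2 V → ℝ} (hx0 : ∀ e, 0 ≤ x e)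
    {S A B : Finset V}
    (hinside : ∀ u v, G.Adj u v → 0 < x s(u, v) → u ∈ A → v ∈ S → v ∈ B)
    {e : Sym2 V} (he : e ∈ G.edgeFinset) (hcross : ¬∃ a b, e = s(a, b) ∧ a ∈ A ∧ b ∉ S) :
    (#{u ∈ A | u ∈ e} : ℝ) * x e ≤ #{u ∈ B | u ∈ e} * x e := by
  induction e using Sym2.ind with | _ a b =>
  have hadj : G.Adj a b := mem_edgeFinset.mp he
  rcases (hx0 s(a, b)).eq_or_lt with hzero | hpos
  · simp [← hzero]
  have hpos' : 0 < x s(b, a) := Sym2.eq_swap ▸ hpos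
  refine mul_le_mul_of_nonneg_right ?_ hpos.le
  exact_mod_cast Sym2.card_filter_mem_mk_le_card_filter_mem_mk hadj.ne
    (fun ha => hinside a b hadj hpos ha <| not_not.mp fun hb => hcross ⟨a, b, rfl, ha, hb⟩)
    (fun hb => hinside b a hadj.symm hpos' hb <|
      not_not.mp fun ha => hcross ⟨b, a, Sym2.eq_swap, hb, ha⟩)

end SimpleGraph

open Classical in
theorem A_minus_counting_general
    {V : Type*} [Fintype V] [DecidableEq V] (G : SimpleGraph V) [DecidableRel G.Adj]
    (x : Sym2 V → ℝ)
    (hx0 : ∀ e, 0 ≤ x e)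
    (hxdeg : ∀ v : V, ∑ e ∈ G.incidenceFinset v, x e = 1)
    (S Aminus Aplus : Finset V)
    (hAm : Aminus ⊆ S)
    (hinside : ∀ u v : V, G.Adj u v → 0 < x s(u, v) →
      u ∈ Aminus → v ∈ S → v ∈ Aplus)
    (hδS : ∑ e ∈ G.edgeFinset.filter
        (fun e => ∃ a b : V, e = s(a, b) ∧ a ∈ S ∧ b ∉ S), x e = 1) :
    ((Aminus.card : ℝ) ≤
      (∑ e ∈ G.edgeFinset.filter
          (fun e => ∃ a b : V, e = s(a, b) ∧ a ∈ Aminus ∧ b ∉ S), x e)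
        + (Aplus.card : ℝ)) ∧
    ((∑ e ∈ G.edgeFinset.filter
          (fun e => ∃ a b : V, e = s(a, b) ∧ a ∈ Aminus ∧ b ∉ S), x e)
        + (Aplus.card : ℝ) ≤ 1 + (Aplus.card : ℝ)) ∧
    ((Aminus.card : ℝ) = 1 + (Aplus.card : ℝ) →
      ∑ e ∈ G.edgeFinset.filter
          (fun e => ∃ a b : V, e = s(a, b) ∧ a ∈ Aminus ∧ b ∉ S), x e = 1) := by
  set cut := G.edgeFinset.filter fun e => ∃ a b : V, e = s(a, b) ∧ a ∈ Aminus ∧ b ∉ S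
  set rest := G.edgeFinset.filter fun e => ¬∃ a b : V, e = s(a, b) ∧ a ∈ Aminus ∧ b ∉ S
  have hcount := G.sum_edgeFinset_card_filter_mem_mul_eq_card hxdeg
  have hlower : (#Aminus : ℝ) ≤ ∑ e ∈ cut, x e + #Aplus := calc
    (#Aminus : ℝ) = ∑ e ∈ cut, (#{u ∈ Aminus | u ∈ e} : ℝ) * x e +
        ∑ e ∈ rest, (#{u ∈ Aminus | u ∈ e} : ℝ) * x e := by
      rw [sum_filter_add_sum_filter_not, hcount]
    _ ≤ ∑ e ∈ cut, x e + ∑ e ∈ rest, (#{u ∈ Aplus | u ∈ e} : ℝ) * x e := by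
      refine add_le_add (sum_le_sum fun e he => ?_) (sum_le_sum fun e he => ?_)
      · exact Sym2.card_filter_mem_mul_le_of_crossing hx0 hAm (mem_filter.mp he).2
      · exact G.card_filter_mem_mul_le_of_not_crossing hx0 hinside (mem_filter.mp he).1
          (mem_filter.mp he).2
    _ ≤ ∑ e ∈ cut, x e + #Aplus := by
      rw [← hcount Aplus]
      exact add_le_add_right (sum_le_sum_of_subset_of_nonneg (filter_subset _ _)
        fun e _ _ => mul_nonneg (Nat.cast_nonneg _) (hx0 e)) _
  have hupper : ∑ e ∈ cut, x e ≤ 1 := hδS ▸ sum_le_sum_of_subset_of_nonneg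
    (monotone_filter_right _ fun e _ ⟨a, b, he, ha, hb⟩ => ⟨a, b, he, hAm ha, hb⟩)
    fun e _ _ => hx0 e
  exact ⟨hlower, by linarith, fun h => le_antisymm hupper (by linarith)⟩

open Classical in
/-- let `x` be a fractional perfect matching, `A⁻, A⁺` disjoint
subsets of `S ⊆ V` such that every support edge of `x` inside `S` with an endpoint
in `A⁻` has its other endpoint in `A⁺`, and `x(δ(S)) = 1`.  Then
`|A⁻| ≤ x(δ(A⁻, V∖S)) + |A⁺| ≤ 1 + |A⁺|`; consequently, if `|A⁻| = 1 + |A⁺|` then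
`x(δ(A⁻, V∖S)) = 1`. -/
theorem A_minus_counting
    {V : Type*} [Fintype V] [DecidableEq V] (G : SimpleGraph V) [DecidableRel G.Adj]
    (x : Sym2 V → ℝ)
    (hx0 : ∀ e, 0 ≤ x e) (hxsupp : ∀ e, e ∉ G.edgeSet → x e = 0)
    (hxdeg : ∀ v : V, ∑ e ∈ G.incidenceFinset v, x e = 1)
    (S Aminus Aplus : Finset V)
    (hAm : Aminus ⊆ S) (hAp : Aplus ⊆ S) (hdisj : Disjoint Aminus Aplus)
    (hinside : ∀ u v : V, G.Adj u v → 0 < x s(u, v) →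
      u ∈ Aminus → v ∈ S → v ∈ Aplus)
    (hδS : ∑ e ∈ G.edgeFinset.filter
        (fun e => ∃ a b : V, e = s(a, b) ∧ a ∈ S ∧ b ∉ S), x e = 1) :
    ((Aminus.card : ℝ) ≤
      (∑ e ∈ G.edgeFinset.filter
          (fun e => ∃ a b : V, e = s(a, b) ∧ a ∈ Aminus ∧ b ∉ S), x e)
        + (Aplus.card : ℝ)) ∧
    ((∑ e ∈ G.edgeFinset.filter
          (fun e => ∃ a b : V, e = s(a, b) ∧ a ∈ Aminus ∧ b ∉ S), x e)
        + (Aplus.card : ℝ) ≤ 1 + (Aplus.card : ℝ)) ∧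
    ((Aminus.card : ℝ) = 1 + (Aplus.card : ℝ) →
      ∑ e ∈ G.edgeFinset.filter
          (fun e => ∃ a b : V, e = s(a, b) ∧ a ∈ Aminus ∧ b ∉ S), x e = 1) :=
  A_minus_counting_general G x hx0 hxdeg S Aminus Aplus hAm hinside hδS
end
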